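/- arXiv:2203.16439 — 6 statements merged into one kernel-verified Lean document; each statement's English description precedes it below -/
import Mathlib

section
/- If H is a Hadamard matrix of order v and there exist vectors X, Y ∈ {±1}^v with H·X = √v·Y, then v is a perfect square. -/
def IsHadamard {v : ℕ} (H : Matrix (Fin v) (Fin v) ℝ) : Prop :=
  (∀ i j, H i j = 1 ∨ H i j = -1) ∧ H * H.transpose = (v : ℝ) • 1

def IsSignVector {v : ℕ} (X : Fin v → ℝ) : Prop := ∀ i, X i = 1 ∨ X i = -1

theorem bent_implies_square {v : ℕ} (H : Matrix (Fin v) (Fin v) ℝ)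
    (hH : IsHadamard H)
    (h : ∃ X Y : Fin v → ℝ, IsSignVector X ∧ IsSignVector Y ∧
      H.mulVec X = Real.sqrt v • Y) :
    ∃ m : ℕ, v = m ^ 2 := by
  rcases Nat.eq_zero_or_pos v with hv | hv
  · exact ⟨0, by simp [hv]⟩
  obtain ⟨X, Y, hX, hY, hXY⟩ := h
  have i0 : Fin v := ⟨0, hv⟩
  -- the entry (H.mulVec X) i0 is an integer
  have hint : ∃ n : ℤ, (H.mulVec X) i0 = (n : ℝ) := by
    refine ⟨∑ j, if H i0 j * X j = 1 then 1 else -1, ?_⟩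
    rw [Matrix.mulVec, dotProduct, Int.cast_sum]
    refine Finset.sum_congr rfl fun j _ => ?_
    rcases hH.1 i0 j with h1 | h1 <;> rcases hX j with h2 | h2 <;>
      norm_num [h1, h2]
  obtain ⟨n, hn⟩ := hint
  have hentry : (n : ℝ) = Real.sqrt v * Y i0 := by
    rw [← hn, hXY]; rfl
  have habs : (n.natAbs : ℝ) = Real.sqrt v := by
    have h1 : |(n : ℝ)| = Real.sqrt v := by
      rw [hentry, abs_mul]
      rcases hY i0 with h2 | h2 <;>
        simp [h2, abs_of_nonneg (Real.sqrt_nonneg (v : ℝ))]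
    rw [← h1, Nat.cast_natAbs, Int.cast_abs]
  refine ⟨n.natAbs, ?_⟩
  have : ((n.natAbs ^ 2 : ℕ) : ℝ) = (v : ℝ) := by
    push_cast
    rw [habs, Real.sq_sqrt (by positivity)]
  exact_mod_cast this.symm
end

section
/- If X is a bent sequence attached to a Hadamard matrix H with dual Y = (1/√v)·H·X, then Y is a bent sequence attached to the transpose Hᵗ. -/
theorem dual_is_bent_for_transpose {v : ℕ} (H : Matrix (Fin v) (Fin v) ℝ)
    (hH : IsHadamard H) (X Y : Fin v → ℝ) (hX : IsSignVector X)
    (hY : Y = (Real.sqrt v)⁻¹ • H.mulVec X) (hYsign : IsSignVector Y) :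
    IsSignVector ((Real.sqrt v)⁻¹ • H.transpose.mulVec Y) := by
  rcases Nat.eq_zero_or_pos v with hv | hv
  · subst hv; intro i; exact i.elim0
  have hv0 : (v : ℝ) ≠ 0 := Nat.cast_ne_zero.mpr hv.ne'
  have hsv : (Real.sqrt v) ≠ 0 := Real.sqrt_ne_zero'.mpr (by positivity)
  -- Hᵗ * H = v • 1
  have h1 : H * ((v : ℝ)⁻¹ • H.transpose) = 1 := by
    rw [Matrix.mul_smul, hH.2, smul_smul, inv_mul_cancel₀ hv0, one_smul]
  have h2 : ((v : ℝ)⁻¹ • H.transpose) * H = 1 := mul_eq_one_comm.mp h1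
  have h3 : H.transpose * H = (v : ℝ) • 1 := by
    have := congrArg (fun M => (v : ℝ) • M) h2
    simpa [smul_smul, mul_inv_cancel₀ hv0, Matrix.smul_mul] using this
  have key : (Real.sqrt v)⁻¹ • H.transpose.mulVec Y = X := by
    rw [hY, Matrix.mulVec_smul, Matrix.mulVec_mulVec, h3,
      Matrix.smul_mulVec, Matrix.one_mulVec, smul_smul, smul_smul]
    have hs : (Real.sqrt v)⁻¹ * (Real.sqrt v)⁻¹ * (v : ℝ) = 1 := by
      rw [← mul_inv, Real.mul_self_sqrt (by positivity), inv_mul_cancel₀ hv0]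
    rw [hs, one_smul]
  rw [key]; exact hX
end

section
/- Let H be a Bush-type Hadamard matrix of order v = 4u², blocked into 2u × 2u blocks H_{ij} of side 2u, with diagonal blocks H_{ii} equal to the all-ones matrix and off-diagonal blocks having all row and column sums zero. Then for every choice of signs ε₁,…,ε_{2u} ∈ {±1}, the vector X = (ε₁·j, …, ε_{2u}·j), with j the all-one vector of length 2u, is a self-dual bent sequence for H. In particular H admits at least 2^{2u} self-dual bent sequences. -/
def IsHadamardGen {ι : Type*} [Fintype ι] [DecidableEq ι] (n : ℕ) (H : Matrix ι ι ℝ) : Prop :=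
  (∀ i j, H i j = 1 ∨ H i j = -1) ∧ H * H.transpose = (n : ℝ) • 1

lemma bush_key {u : ℕ} (hu : 0 < u)
    (H : Matrix (Fin (2 * u) × Fin (2 * u)) (Fin (2 * u) × Fin (2 * u)) ℝ)
    (hdiag : ∀ i a b, H (i, a) (i, b) = 1)
    (hrow : ∀ i j a, i ≠ j → ∑ b, H (i, a) (j, b) = 0)
    (ε : Fin (2 * u) → ℝ) :
    (Real.sqrt (4 * u ^ 2))⁻¹ • H.mulVec (fun q => ε q.1) = fun q => ε q.1 := by
  have hs : Real.sqrt (4 * u ^ 2) = 2 * u := by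
    rw [show ((4 : ℝ) * (u : ℝ) ^ 2) = ((2 : ℝ) * u) ^ 2 by ring,
      Real.sqrt_sq (by positivity)]
  funext q
  obtain ⟨i, a⟩ := q
  simp only [Pi.smul_apply, Matrix.mulVec, dotProduct, smul_eq_mul]
  rw [Fintype.sum_prod_type]
  have h1 : ∀ j : Fin (2 * u), ∑ b, H (i, a) (j, b) * ε j
      = if j = i then (2 * u : ℝ) * ε i else 0 := by
    intro j
    rw [← Finset.sum_mul]
    by_cases h : j = i
    · subst h
      simp [hdiag]
    · rw [hrow i j a (Ne.symm h)]
      simp [h]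
  rw [Finset.sum_congr rfl fun j _ => h1 j, Finset.sum_ite_eq' Finset.univ i]
  simp only [Finset.mem_univ, if_true]
  have h2u : (2 * u : ℝ) ≠ 0 := by positivity
  rw [hs]
  field_simp

theorem bush_type_selfdual_bent {u : ℕ} (hu : 0 < u)
    (H : Matrix (Fin (2 * u) × Fin (2 * u)) (Fin (2 * u) × Fin (2 * u)) ℝ)
    (hH : IsHadamardGen (4 * u ^ 2) H)
    (hdiag : ∀ i a b, H (i, a) (i, b) = 1)
    (hrow : ∀ i j a, i ≠ j → ∑ b, H (i, a) (j, b) = 0)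
    (hcol : ∀ i j b, i ≠ j → ∑ a, H (i, a) (j, b) = 0) :
    (∀ ε : Fin (2 * u) → ℝ, (∀ i, ε i = 1 ∨ ε i = -1) →
      (∀ p : Fin (2 * u) × Fin (2 * u), (fun q : Fin (2 * u) × Fin (2 * u) => ε q.1) p = 1 ∨
        (fun q : Fin (2 * u) × Fin (2 * u) => ε q.1) p = -1) ∧
      (Real.sqrt (4 * u ^ 2))⁻¹ • H.mulVec (fun q => ε q.1) = fun q => ε q.1) ∧
    2 ^ (2 * u) ≤ Set.ncard {X : Fin (2 * u) × Fin (2 * u) → ℝ |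
      (∀ p, X p = 1 ∨ X p = -1) ∧ (Real.sqrt (4 * u ^ 2))⁻¹ • H.mulVec X = X} := by
  constructor
  · intro ε hε
    exact ⟨fun p => hε p.1, bush_key hu H hdiag hrow ε⟩
  · set S := {X : Fin (2 * u) × Fin (2 * u) → ℝ |
      (∀ p, X p = 1 ∨ X p = -1) ∧ (Real.sqrt (4 * u ^ 2))⁻¹ • H.mulVec X = X} with hS
    let f : (Fin (2 * u) → Bool) → (Fin (2 * u) × Fin (2 * u) → ℝ) :=
      fun b q => if b q.1 then 1 else -1
    have hfS : ∀ b, f b ∈ S := by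
      intro b
      constructor
      · intro p
        by_cases h : b p.1 <;> simp [f, h]
      · exact bush_key hu H hdiag hrow (fun i => if b i then 1 else -1)
    have hinj : Function.Injective f := by
      intro b c h
      funext i
      have h0 : (0 : ℕ) < 2 * u := by omega
      have := congrFun h (i, ⟨0, h0⟩)
      by_cases hb : b i <;> by_cases hc : c i <;>
        simp [f, hb, hc] at this ⊢ <;> norm_num at this
    have hsub : Set.range f ⊆ S := by
      rintro _ ⟨b, rfl⟩; exact hfS b
    have hfin : S.Finite := by
      have : S ⊆ Set.pi Set.univ (fun _ : Fin (2 * u) × Fin (2 * u) => ({1, -1} : Set ℝ)) := by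
        intro X hX p _
        exact hX.1 p
      exact Set.Finite.subset (Set.Finite.pi fun _ => (Set.finite_singleton (-1)).insert 1) this
    have hcard : (Set.range f).ncard = 2 ^ (2 * u) := by
      rw [← Nat.card_coe_set_eq, Nat.card_range_of_injective hinj]
      simp [Nat.card_eq_fintype_card]
    calc 2 ^ (2 * u) = (Set.range f).ncard := hcard.symm
      _ ≤ S.ncard := Set.ncard_le_ncard hsub hfin
end

section
/- With notation as in the extended affine transform theorem for the Sylvester matrix, the transform T_{A,b,d,c} commutes with the Walsh–Hadamard transform S_v (v = 2^m), i.e., S_v ∘ T_{A,b,d,c} = T_{A,b,d,c} ∘ S_v, if and only if Aᵗ = A⁻¹, b = d, and the Hamming weight of b is even. -/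
open Matrix Finset

def chi {m : ℕ} (x y : Fin m → ZMod 2) : ℝ :=
  (-1 : ℝ) ^ (∑ i, (x i).val * (y i).val)

def walsh {m : ℕ} (F : (Fin m → ZMod 2) → ℝ) : (Fin m → ZMod 2) → ℝ :=
  fun y => ∑ x, F x * chi x y

noncomputable def eat {m : ℕ} (A : Matrix (Fin m) (Fin m) (ZMod 2)) (b d : Fin m → ZMod 2)
    (c : ℝ) (F : (Fin m → ZMod 2) → ℝ) : (Fin m → ZMod 2) → ℝ :=
  fun x => F (A⁻¹.mulVec x + A⁻¹.mulVec b) * chi d x * c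

lemma zmod2_cases : ∀ a : ZMod 2, a = 0 ∨ a = 1 := by decide

noncomputable def ee (a : ZMod 2) : ℝ := (-1 : ℝ) ^ a.val

lemma ee_zero : ee 0 = 1 := by norm_num [ee, ZMod.val_zero]

lemma ee_one : ee 1 = -1 := by norm_num [ee, ZMod.val_one]

lemma ee_add (a b : ZMod 2) : ee (a + b) = ee a * ee b := by
  rcases zmod2_cases a with rfl | rfl <;> rcases zmod2_cases b with rfl | rfl
  · rw [add_zero, ee_zero]; ring
  · rw [zero_add, ee_zero]; ring
  · rw [add_zero, ee_zero, ee_one]; ring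
  · rw [(by decide : (1:ZMod 2)+1 = 0), ee_zero, ee_one]; ring


lemma ee_inj {a b : ZMod 2} (h : ee a = ee b) : a = b := by
  rcases zmod2_cases a with rfl | rfl <;> rcases zmod2_cases b with rfl | rfl <;>
    norm_num [ee_zero, ee_one] at h <;> rfl

lemma ee_ne_zero (a : ZMod 2) : ee a ≠ 0 := by
  rcases zmod2_cases a with rfl | rfl <;> norm_num [ee_zero, ee_one]

lemma ee_natCast (n : ℕ) : ee (n : ZMod 2) = (-1 : ℝ) ^ n := by
  unfold ee
  rw [ZMod.val_natCast]
  conv_rhs => rw [← Nat.div_add_mod n 2]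
  rw [pow_add, pow_mul]
  norm_num

lemma chi_eq {m : ℕ} (x y : Fin m → ZMod 2) : chi x y = ee (x ⬝ᵥ y) := by
  unfold chi dotProduct
  rw [← ee_natCast]
  congr 1
  push_cast [ZMod.natCast_val, ZMod.cast_id]
  rfl

lemma dot_transpose {m : ℕ} (A : Matrix (Fin m) (Fin m) (ZMod 2)) (z y : Fin m → ZMod 2) :
    z ⬝ᵥ Aᵀ.mulVec y = A.mulVec z ⬝ᵥ y := by
  rw [dotProduct_mulVec, vecMul_transpose]

lemma vec_eq_of_dot {m : ℕ} {p q : Fin m → ZMod 2} (h : ∀ z, p ⬝ᵥ z = q ⬝ᵥ z) : p = q := by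
  funext i
  have := h (Pi.single i 1)
  simpa [dotProduct_single] using this

lemma mat_eq_of_mulVec {m : ℕ} {M N : Matrix (Fin m) (Fin m) (ZMod 2)}
    (h : ∀ y, M.mulVec y = N.mulVec y) : M = N := by
  ext i j
  have := congrFun (h (Pi.single j 1)) i
  simpa [mulVec_single] using this

lemma dot_self_eq_card {m : ℕ} (b : Fin m → ZMod 2) :
    b ⬝ᵥ b = ((Finset.univ.filter (fun i => b i ≠ 0)).card : ZMod 2) := by
  rw [Finset.card_filter]
  push_cast
  unfold dotProduct
  refine Finset.sum_congr rfl fun i _ => ?_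
  rcases zmod2_cases (b i) with h | h <;> simp [h]

theorem sylvester_strong_aut_characterization {m : ℕ}
    (A : Matrix (Fin m) (Fin m) (ZMod 2)) (hA : IsUnit A)
    (b d : Fin m → ZMod 2) (c : ℝ) (hc : c = 1 ∨ c = -1) :
    (∀ F : (Fin m → ZMod 2) → ℝ, walsh (eat A b d c F) = eat A b d c (walsh F)) ↔
      (A.transpose = A⁻¹ ∧ b = d ∧
        Even (Finset.univ.filter (fun i => b i ≠ 0)).card) := by
  have hA' : IsUnit A.det := (Matrix.isUnit_iff_isUnit_det A).mp hA
  have hc0 : c ≠ 0 := by rcases hc with rfl | rfl <;> norm_num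
  have hAiA : ∀ v : Fin m → ZMod 2, A⁻¹.mulVec (A.mulVec v) = v := by
    intro v; rw [mulVec_mulVec, nonsing_inv_mul A hA', one_mulVec]
  have hAAi : ∀ v : Fin m → ZMod 2, A.mulVec (A⁻¹.mulVec v) = v := by
    intro v; rw [mulVec_mulVec, mul_nonsing_inv A hA', one_mulVec]
  have haddself : ∀ v : Fin m → ZMod 2, v + v = 0 := by
    intro v; funext i; exact CharTwo.add_self_eq_zero _
  have hcond : ∀ x z : Fin m → ZMod 2,
      (A⁻¹.mulVec x + A⁻¹.mulVec b = z) ↔ (x = A.mulVec z + b) := by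
    intro x z
    constructor
    · intro hx
      rw [← hx, mulVec_add, hAAi, hAAi, add_assoc, haddself, add_zero]
    · intro hx
      rw [hx, mulVec_add, hAiA, add_assoc, haddself, add_zero]
  constructor
  · intro h
    have key : ∀ z y : Fin m → ZMod 2,
        chi d (A.mulVec z + b) * c * chi (A.mulVec z + b) y
          = chi z (A⁻¹.mulVec y + A⁻¹.mulVec b) * chi d y * c := by
      intro z y
      have hF := congrFun (h (fun w => if w = z then (1:ℝ) else 0)) y
      simp only [walsh, eat, hcond, ite_mul, one_mul, zero_mul,
        Finset.sum_ite_eq', Finset.mem_univ, if_true] at hF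
      exact hF
    have keyE : ∀ z y : Fin m → ZMod 2,
        d ⬝ᵥ A.mulVec z + d ⬝ᵥ b + A.mulVec z ⬝ᵥ y + b ⬝ᵥ y
          = z ⬝ᵥ A⁻¹.mulVec y + z ⬝ᵥ A⁻¹.mulVec b + d ⬝ᵥ y := by
      intro z y
      have hk := key z y
      rw [chi_eq, chi_eq, chi_eq, chi_eq] at hk
      have hk2 : ee (d ⬝ᵥ (A.mulVec z + b)) * ee ((A.mulVec z + b) ⬝ᵥ y)
          = ee (z ⬝ᵥ (A⁻¹.mulVec y + A⁻¹.mulVec b)) * ee (d ⬝ᵥ y) := by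
        apply mul_right_cancel₀ hc0
        linear_combination hk
      rw [← ee_add, ← ee_add] at hk2
      have h3 := ee_inj hk2
      simp only [dotProduct_add, add_dotProduct] at h3
      linear_combination h3
    have E00 : d ⬝ᵥ b = 0 := by
      have h0 := keyE 0 0
      simpa only [mulVec_zero, dotProduct_zero, zero_dotProduct, zero_add, add_zero] using h0
    have E0y : ∀ y, b ⬝ᵥ y = d ⬝ᵥ y := by
      intro y
      have h0 := keyE 0 y
      simp only [mulVec_zero, dotProduct_zero, zero_dotProduct, zero_add, add_zero] at h0
      linear_combination h0 - E00
    have hbd : b = d := vec_eq_of_dot E0y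
    have hAz : ∀ z y, A.mulVec z ⬝ᵥ y = z ⬝ᵥ A⁻¹.mulVec y := by
      intro z y
      have h1 := keyE z y
      have h2 := keyE z 0
      simp only [mulVec_zero, dotProduct_zero, zero_dotProduct, zero_add, add_zero] at h2
      have h3 := E0y y
      linear_combination h1 - h2 - h3
    have hAT : Aᵀ = A⁻¹ := by
      apply mat_eq_of_mulVec
      intro y
      refine vec_eq_of_dot fun z => ?_
      calc Aᵀ.mulVec y ⬝ᵥ z = z ⬝ᵥ Aᵀ.mulVec y := dotProduct_comm _ _
        _ = A.mulVec z ⬝ᵥ y := dot_transpose A z y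
        _ = z ⬝ᵥ A⁻¹.mulVec y := hAz z y
        _ = A⁻¹.mulVec y ⬝ᵥ z := dotProduct_comm _ _
    refine ⟨hAT, hbd, ?_⟩
    rw [← hbd] at E00
    rw [dot_self_eq_card] at E00
    rwa [ZMod.natCast_eq_zero_iff, ← even_iff_two_dvd] at E00
  · rintro ⟨hAT, rfl, heven⟩
    have hbb : b ⬝ᵥ b = 0 := by
      rw [dot_self_eq_card, ZMod.natCast_eq_zero_iff, ← even_iff_two_dvd]
      exact heven
    intro F
    funext y
    simp only [walsh, eat]
    let σ : (Fin m → ZMod 2) ≃ (Fin m → ZMod 2) :=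
      { toFun := fun z => A.mulVec z + b
        invFun := fun x => A⁻¹.mulVec x + A⁻¹.mulVec b
        left_inv := fun z => (hcond (A.mulVec z + b) z).mpr rfl
        right_inv := fun x => by
          show A.mulVec (A⁻¹.mulVec x + A⁻¹.mulVec b) + b = x
          rw [mulVec_add, hAAi, hAAi, add_assoc, haddself, add_zero] }
    rw [← Equiv.sum_comp σ
      (fun x => F (A⁻¹.mulVec x + A⁻¹.mulVec b) * chi b x * c * chi x y)]
    rw [Finset.sum_mul, Finset.sum_mul]
    refine Finset.sum_congr rfl fun z _ => ?_
    simp only [σ, Equiv.coe_fn_mk]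
    rw [(hcond (A.mulVec z + b) z).mpr rfl]
    rw [chi_eq, chi_eq, chi_eq, chi_eq]
    have hxp : b ⬝ᵥ (A.mulVec z + b) + (A.mulVec z + b) ⬝ᵥ y
        = z ⬝ᵥ (A⁻¹.mulVec y + A⁻¹.mulVec b) + b ⬝ᵥ y := by
      simp only [dotProduct_add, add_dotProduct]
      have t1 : A.mulVec z ⬝ᵥ y = z ⬝ᵥ A⁻¹.mulVec y := by
        rw [← hAT, dot_transpose]
      have t2 : b ⬝ᵥ A.mulVec z = z ⬝ᵥ A⁻¹.mulVec b := by
        rw [← hAT, dot_transpose, dotProduct_comm]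
      linear_combination t1 + t2 + hbb
    have hee : ee (b ⬝ᵥ (A.mulVec z + b)) * ee ((A.mulVec z + b) ⬝ᵥ y)
        = ee (z ⬝ᵥ (A⁻¹.mulVec y + A⁻¹.mulVec b)) * ee (b ⬝ᵥ y) := by
      rw [← ee_add, ← ee_add, hxp]
    linear_combination (F z * c) * hee
end

section
/- Let m = 2k. The number of matrices A ∈ GL(m, 𝔽₂) with A·Aᵗ = I is 2^{k²}·∏_{i=1}^{k-1}(2^{2i} - 1). -/
/-!
Sending an orthogonal matrix to its first row maps `O(n + 1)` onto the set of vectors that occur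
as first rows, and every fibre is a coset of the stabiliser of `e₀`, which is `O(n)`. Over `𝔽₂`
the norm `v ⬝ᵥ v` is the parity of the weight of `v`, and the transvections `x ↦ x + (u ⬝ᵥ x) u`
with `u ⬝ᵥ u = 0` are orthogonal; with them one moves `e₀` to any vector of odd weight other
than the all-ones vector `𝟙`. In size `≥ 2`, `𝟙` is no row, since `𝟙 ⬝ᵥ w = w ⬝ᵥ w = 1` for every
other row `w`. Hence `|O(2k + 2)| = 2^(2k+1) (2^(2k) - 1) |O(2k)|` for `k ≥ 1`, and `|O(2)| = 2`.
-/

open Matrix Finset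

section Orthogonal

variable {R ι : Type*} [CommRing R] [Fintype ι] [DecidableEq ι] {A B : Matrix ι ι R}

lemma dotProduct_rows_of_mul_transpose_eq_one (hA : A * Aᵀ = 1) (i j : ι) :
    A i ⬝ᵥ A j = (1 : Matrix ι ι R) i j :=
  congrFun (congrFun hA i) j

lemma mul_transpose_eq_one_mul (hA : A * Aᵀ = 1) (hB : B * Bᵀ = 1) :
    (A * B) * (A * B)ᵀ = 1 := by
  rw [transpose_mul, Matrix.mul_assoc, ← Matrix.mul_assoc B, hB, Matrix.one_mul, hA]

lemma transpose_mul_transpose_eq_one (hA : A * Aᵀ = 1) : Aᵀ * Aᵀᵀ = 1 := by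
  rwa [transpose_transpose, mul_eq_one_comm]

end Orthogonal

section Transvection

variable {R ι : Type*} [CommRing R] [Fintype ι]

lemma add_dotProduct_add_self [CharP R 2] (x y : ι → R) :
    (x + y) ⬝ᵥ (x + y) = x ⬝ᵥ x + y ⬝ᵥ y := by
  rw [add_dotProduct, dotProduct_add, dotProduct_add, dotProduct_comm y x]
  linear_combination (x ⬝ᵥ y) * CharTwo.two_eq_zero (R := R)

variable [DecidableEq ι]

def isotropicTransvection (u : ι → R) : Matrix ι ι R := 1 + vecMulVec u u

lemma isotropicTransvection_mulVec (u x : ι → R) :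
    isotropicTransvection u *ᵥ x = x + (u ⬝ᵥ x) • u := by
  rw [isotropicTransvection, add_mulVec, one_mulVec, vecMulVec_mulVec, op_smul_eq_smul]

variable [CharP R 2]

lemma isotropicTransvection_mul_transpose {u : ι → R} (hu : u ⬝ᵥ u = 0) :
    isotropicTransvection u * (isotropicTransvection u)ᵀ = 1 := by
  have hsymm : (isotropicTransvection u)ᵀ = isotropicTransvection u := by
    rw [isotropicTransvection, transpose_add, transpose_one, transpose_vecMulVec]
  rw [hsymm, ext_iff_mulVec]
  intro x
  rw [← mulVec_mulVec, one_mulVec, isotropicTransvection_mulVec, isotropicTransvection_mulVec,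
    dotProduct_add, dotProduct_smul, hu, smul_zero, add_zero, add_assoc, ← add_smul,
    CharTwo.add_self_eq_zero, zero_smul, add_zero]

lemma exists_mul_transpose_eq_one_mulVec_eq {x y : ι → R} (hx : x ⬝ᵥ x = 1) (hy : y ⬝ᵥ y = 1)
    (hxy : x ⬝ᵥ y = 0) : ∃ M : Matrix ι ι R, M * Mᵀ = 1 ∧ M *ᵥ x = y := by
  have hu : (x + y) ⬝ᵥ (x + y) = 0 := by
    rw [add_dotProduct_add_self, hx, hy, CharTwo.add_self_eq_zero]
  have hux : (x + y) ⬝ᵥ x = 1 := by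
    rw [add_dotProduct, hx, dotProduct_comm, hxy, add_zero]
  refine ⟨isotropicTransvection (x + y), isotropicTransvection_mul_transpose hu, ?_⟩
  rw [isotropicTransvection_mulVec, hux, one_smul, ← add_assoc, ← two_smul R x,
    CharTwo.two_eq_zero, zero_smul, zero_add]

end Transvection

section Stabilizer

variable {R : Type*} [CommRing R] {n : ℕ}

def oneBlockDiag (B : Matrix (Fin n) (Fin n) R) : Matrix (Fin (n + 1)) (Fin (n + 1)) R :=
  of (vecCons (Pi.single 0 1) fun i => vecCons 0 (B i))

@[simp]
lemma oneBlockDiag_zero (B : Matrix (Fin n) (Fin n) R) : oneBlockDiag B 0 = Pi.single 0 1 := rfl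

@[simp]
lemma oneBlockDiag_succ (B : Matrix (Fin n) (Fin n) R) (i : Fin n) :
    oneBlockDiag B i.succ = vecCons 0 (B i) := rfl

lemma oneBlockDiag_mul_transpose {B : Matrix (Fin n) (Fin n) R} (hB : B * Bᵀ = 1) :
    oneBlockDiag B * (oneBlockDiag B)ᵀ = 1 := by
  ext i j
  rw [mul_apply']
  induction i using Fin.cases <;> induction j using Fin.cases <;>
    simp [one_apply, (Fin.succ_ne_zero _).symm, dotProduct_rows_of_mul_transpose_eq_one hB]

variable {A : Matrix (Fin (n + 1)) (Fin (n + 1)) R}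

lemma apply_succ_zero_of_row_zero (hA : A * Aᵀ = 1) (h0 : A 0 = Pi.single 0 1) (i : Fin n) :
    A i.succ 0 = 0 := by
  simpa [h0] using dotProduct_rows_of_mul_transpose_eq_one hA i.succ 0

lemma submatrix_succ_mul_transpose (hA : A * Aᵀ = 1) (h0 : A 0 = Pi.single 0 1) :
    A.submatrix Fin.succ Fin.succ * (A.submatrix Fin.succ Fin.succ)ᵀ = 1 := by
  ext i j
  have h := dotProduct_rows_of_mul_transpose_eq_one hA i.succ j.succ
  rw [dotProduct, Fin.sum_univ_succ, apply_succ_zero_of_row_zero hA h0, zero_mul, zero_add] at h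
  simpa [mul_apply', dotProduct, one_apply] using h

lemma oneBlockDiag_submatrix_succ (hA : A * Aᵀ = 1) (h0 : A 0 = Pi.single 0 1) :
    oneBlockDiag (A.submatrix Fin.succ Fin.succ) = A := by
  ext i j
  induction i using Fin.cases
  · simp [oneBlockDiag, h0]
  · induction j using Fin.cases
    · simp [oneBlockDiag, apply_succ_zero_of_row_zero hA h0]
    · simp [oneBlockDiag]

end Stabilizer

section Counting

variable (R : Type*) [CommRing R] [Fintype R] [DecidableEq R]

def orthogonalMatrices (n : ℕ) : Finset (Matrix (Fin n) (Fin n) R) :=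
  {A | A * Aᵀ = 1}

variable {R} {n : ℕ}

lemma mem_orthogonalMatrices {A : Matrix (Fin n) (Fin n) R} :
    A ∈ orthogonalMatrices R n ↔ A * Aᵀ = 1 := by
  simp [orthogonalMatrices]

lemma card_filter_row_zero_eq {B : Matrix (Fin (n + 1)) (Fin (n + 1)) R} (hB : B * Bᵀ = 1) :
    #{A ∈ orthogonalMatrices R (n + 1) | A 0 = B 0} =
      #{A ∈ orthogonalMatrices R (n + 1) | A 0 = Pi.single 0 1} := by
  have hBt : Bᵀ * B = 1 := mul_eq_one_comm.mp hB
  refine card_nbij' (· * Bᵀ) (· * B) (fun A hA => ?_) (fun C hC => ?_)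
    (fun A _ => by simp [Matrix.mul_assoc, hBt]) (fun C _ => by simp [Matrix.mul_assoc, hB])
  · simp only [mem_coe, mem_filter, mem_orthogonalMatrices] at hA ⊢
    refine ⟨mul_transpose_eq_one_mul hA.1 (transpose_mul_transpose_eq_one hB), ?_⟩
    ext j
    rw [mul_apply', hA.2]
    exact (dotProduct_rows_of_mul_transpose_eq_one hB 0 j).trans one_eq_pi_single
  · simp only [mem_coe, mem_filter, mem_orthogonalMatrices] at hC ⊢
    refine ⟨mul_transpose_eq_one_mul hC.1 hB, ?_⟩
    rw [mul_apply_eq_vecMul, hC.2, single_one_vecMul, row]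

lemma card_filter_row_zero_eq_single :
    #{A ∈ orthogonalMatrices R (n + 1) | A 0 = Pi.single 0 1} = #(orthogonalMatrices R n) := by
  refine card_nbij' (·.submatrix Fin.succ Fin.succ) oneBlockDiag (fun A hA => ?_) (fun B hB => ?_)
    (fun A hA => ?_) (fun B _ => rfl)
  all_goals simp only [mem_coe, mem_filter, mem_orthogonalMatrices] at *
  · exact submatrix_succ_mul_transpose hA.1 hA.2
  · exact ⟨oneBlockDiag_mul_transpose hB, oneBlockDiag_zero B⟩
  · exact oneBlockDiag_submatrix_succ hA.1 hA.2

lemma card_orthogonalMatrices_succ :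
    #(orthogonalMatrices R (n + 1)) =
      #((orthogonalMatrices R (n + 1)).image (· 0)) * #(orthogonalMatrices R n) := by
  rw [card_eq_sum_card_image (· 0), ← smul_eq_mul, ← sum_const]
  refine sum_congr rfl fun v hv => ?_
  obtain ⟨B, hB, rfl⟩ := mem_image.mp hv
  rw [card_filter_row_zero_eq (mem_orthogonalMatrices.mp hB), card_filter_row_zero_eq_single]

end Counting

lemma card_filter_sum_eq {K : Type*} [AddCommGroup K] [Fintype K] [DecidableEq K] (m : ℕ)
    (c : K) :
    #{v : Fin (m + 1) → K | ∑ i, v i = c} = Fintype.card K ^ m := by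
  rw [show Fintype.card K ^ m = #(univ : Finset (Fin m → K)) by simp]
  refine card_nbij' Fin.tail (fun w => Fin.cons (c - ∑ i, w i) w)
    (fun _ _ => mem_coe.mpr (mem_univ _)) (fun w _ => ?_) (fun v hv => ?_)
    (fun w _ => Fin.tail_cons _ _)
  · simp [Fin.sum_univ_succ]
  · simp only [mem_coe, mem_filter, mem_univ, true_and, Fin.sum_univ_succ] at hv
    rw [← hv]
    exact (congrArg (Fin.cons · _) (add_sub_cancel_right _ _)).trans (Fin.cons_self_tail v)

section ZModTwo

variable {n : ℕ}

lemma dotProduct_self_eq_sum {ι : Type*} [Fintype ι] (v : ι → ZMod 2) : v ⬝ᵥ v = ∑ i, v i := by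
  refine sum_congr rfl fun i _ => ?_
  generalize v i = x
  revert x
  decide

/-- Since `1 ⬝ᵥ w = w ⬝ᵥ w`, the all-ones vector is a row of an orthogonal matrix only in size
one. -/
def firstRows (n : ℕ) : Finset (Fin (n + 1) → ZMod 2) :=
  {v | v ⬝ᵥ v = 1 ∧ (v = 1 → v = Pi.single 0 1)}

lemma row_zero_mem_firstRows {A : Matrix (Fin (n + 1)) (Fin (n + 1)) (ZMod 2)}
    (hA : A * Aᵀ = 1) : A 0 ∈ firstRows n := by
  have hnorm (i : Fin (n + 1)) : A i ⬝ᵥ A i = 1 := by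
    rw [dotProduct_rows_of_mul_transpose_eq_one hA, one_apply_eq]
  refine mem_filter.mpr ⟨mem_univ _, hnorm 0, fun hone => funext fun j => ?_⟩
  rcases eq_or_ne j 0 with rfl | hj
  · simp [hone]
  · have h := dotProduct_rows_of_mul_transpose_eq_one hA j 0
    rw [one_apply_ne hj, hone, dotProduct_one, ← dotProduct_self_eq_sum, hnorm] at h
    exact absurd h one_ne_zero

lemma exists_mul_transpose_eq_one_mulVec_single {v : Fin (n + 1) → ZMod 2}
    (hv : v ∈ firstRows n) : ∃ M, M * Mᵀ = 1 ∧ M *ᵥ Pi.single 0 1 = v := by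
  obtain ⟨hnorm, hone⟩ := (mem_filter.mp hv).2
  have hsingle (l : Fin (n + 1)) :
      Pi.single l 1 ⬝ᵥ (Pi.single l 1 : Fin (n + 1) → ZMod 2) = 1 := by
    simp
  rcases eq_or_ne v (Pi.single 0 1) with rfl | hv0
  · exact ⟨1, by simp, one_mulVec _⟩
  by_cases h0 : v 0 = 0
  · exact exists_mul_transpose_eq_one_mulVec_eq (hsingle 0) hnorm (by simpa using h0)
  -- Otherwise go through a basis vector orthogonal to both `v` and `Pi.single 0 1`.
  obtain ⟨l, hl⟩ : ∃ l, v l = 0 := by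
    by_contra! h
    exact hv0 (hone (funext fun i => Fin.eq_one_of_ne_zero (v i) (h i)))
  have hl0 : l ≠ 0 := fun h => h0 (h ▸ hl)
  obtain ⟨M₁, hM₁, h₁⟩ :=
    exists_mul_transpose_eq_one_mulVec_eq (hsingle 0) (hsingle l) (by simp [hl0.symm])
  obtain ⟨M₂, hM₂, h₂⟩ :=
    exists_mul_transpose_eq_one_mulVec_eq (hsingle l) hnorm (by simpa using hl)
  exact ⟨M₂ * M₁, mul_transpose_eq_one_mul hM₂ hM₁, by rw [← mulVec_mulVec, h₁, h₂]⟩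

lemma image_row_zero_orthogonalMatrices :
    (orthogonalMatrices (ZMod 2) (n + 1)).image (· 0) = firstRows n := by
  refine Subset.antisymm (fun v hv => ?_) (fun v hv => ?_)
  · obtain ⟨A, hA, rfl⟩ := mem_image.mp hv
    exact row_zero_mem_firstRows (mem_orthogonalMatrices.mp hA)
  · obtain ⟨M, hM, hMv⟩ := exists_mul_transpose_eq_one_mulVec_single hv
    refine mem_image.mpr ⟨Mᵀ, mem_orthogonalMatrices.mpr (transpose_mul_transpose_eq_one hM), ?_⟩
    rw [← hMv, mulVec_single_one]
    rfl

lemma firstRows_zero : firstRows 0 = ({v | ∑ i, v i = 1} : Finset (Fin 1 → ZMod 2)) := by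
  have : (Pi.single 0 1 : Fin 1 → ZMod 2) = 1 := by
    ext i
    rw [Subsingleton.elim i 0, Pi.single_eq_same, Pi.one_apply]
  simp [firstRows, dotProduct_self_eq_sum, this]

lemma firstRows_two_mul_add_one (j : ℕ) :
    firstRows (2 * j + 1) = ({v | ∑ i, v i = 1} : Finset (Fin (2 * j + 2) → ZMod 2)) := by
  ext v
  simp only [firstRows, mem_filter, mem_univ, true_and, dotProduct_self_eq_sum,
    and_iff_left_iff_imp]
  rintro hsum rfl
  simp [CharTwo.two_eq_zero] at hsum

lemma firstRows_two_mul_succ (j : ℕ) : firstRows (2 * (j + 1)) =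
    ({v | ∑ i, v i = 1} : Finset (Fin (2 * (j + 1) + 1) → ZMod 2)).erase 1 := by
  have hsingle : (1 : Fin (2 * (j + 1) + 1) → ZMod 2) ≠ Pi.single 0 1 := fun h => by
    simpa using congrFun h 1
  ext v
  by_cases hv : v = 1
  · simp [firstRows, hv, hsingle]
  · simp [firstRows, hv, dotProduct_self_eq_sum]

end ZModTwo

lemma card_orthogonalMatrices_two_mul (k : ℕ) :
    #(orthogonalMatrices (ZMod 2) (2 * k)) =
      2 ^ (k ^ 2) * ∏ i ∈ Icc 1 (k - 1), (2 ^ (2 * i) - 1) := by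
  induction k with
  | zero => rfl
  | succ k ih =>
    rw [mul_add_one, card_orthogonalMatrices_succ, card_orthogonalMatrices_succ, ih,
      image_row_zero_orthogonalMatrices, image_row_zero_orthogonalMatrices,
      firstRows_two_mul_add_one, card_filter_sum_eq, ZMod.card]
    cases k with
    | zero => rw [Nat.mul_zero, firstRows_zero, card_filter_sum_eq]; rfl
    | succ j =>
      rw [firstRows_two_mul_succ, card_erase_of_mem (by simp [CharTwo.two_eq_zero]),
        card_filter_sum_eq, ZMod.card]
      simp only [add_tsub_cancel_right]
      rw [prod_Icc_succ_top (by omega)]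
      ring

theorem orthogonal_group_card_even (k : ℕ) :
    (Finset.univ.filter
        (fun A : Matrix (Fin (2 * k)) (Fin (2 * k)) (ZMod 2) =>
          IsUnit A ∧ A * A.transpose = 1)).card =
      2 ^ (k ^ 2) * ∏ i ∈ Finset.Icc 1 (k - 1), (2 ^ (2 * i) - 1) := by
  rw [← card_orthogonalMatrices_two_mul, orthogonalMatrices]
  congr 1
  exact filter_congr fun A _ => and_iff_right_of_imp (IsUnit.of_mul_eq_one _)
end

section
/- Let m = 2k+1. The number of matrices A ∈ GL(m, 𝔽₂) with A·Aᵗ = I is 2^{k²}·∏_{i=1}^{k}(2^{2i} - 1). -/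
/-!
Over `𝔽₂` we have `x * x = x`, so the quadratic form `v ⬝ᵥ v` is the linear form `1 ⬝ᵥ v`.
Hence `v` extends an orthonormal family `g₀, …, g_{i-1}` in `𝔽₂ⁿ` exactly when it solves the
linear system `1 ⬝ᵥ v = 1`, `gₗ ⬝ᵥ v = 0`. If `∑ gₗ = 1` this system is inconsistent; otherwise
its rows are independent and it has `2^(n-1-i)` solutions. The extended family sums to `1` only
for `v = 1 - ∑ gₗ`, and for odd `n` this `v` is itself a solution iff `i` is even. Choosing the
rows of an orthogonal matrix one at a time therefore gives `∏_{i<2k} (2^(2k-i) - [i even])`.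
-/

open Finset Matrix

theorem AddMonoidHom.card_fiber_mul_card_of_surjective {G M F : Type*} [AddGroup G] [Fintype G]
    [AddMonoid M] [Fintype M] [DecidableEq M] [FunLike F G M] [AddMonoidHomClass F G M]
    (f : F) (hf : Function.Surjective f) (y : M) :
    #{g | f g = y} * Fintype.card M = Fintype.card G := by
  rw [← card_univ (α := G), card_eq_sum_card_fiberwise (f := f) (s := univ) (t := univ) (by simp),
    sum_congr rfl fun z _ => card_fiber_eq_of_mem_range f (hf z) (hf y), sum_const, card_univ,
    smul_eq_mul, mul_comm]

section LinearSystems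

variable {K m n : Type*} [Field K] [Fintype m] [Fintype n] {A : Matrix m n K}

theorem Matrix.mulVec_surjective_of_linearIndependent_row (h : LinearIndependent K A.row) :
    Function.Surjective A.mulVec := by
  have hrange : LinearMap.range A.mulVecLin = ⊤ :=
    Submodule.eq_top_of_finrank_eq <| by
      rw [Module.finrank_fintype_fun_eq_card, ← h.rank_matrix]
      rfl
  exact LinearMap.range_eq_top.mp hrange

theorem Matrix.card_mulVec_eq_mul_pow [Fintype K] [DecidableEq K] [DecidableEq m] [DecidableEq n]
    (h : LinearIndependent K A.row) (b : m → K) :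
    #{v | A *ᵥ v = b} * Fintype.card K ^ Fintype.card m = Fintype.card K ^ Fintype.card n := by
  have := AddMonoidHom.card_fiber_mul_card_of_surjective A.mulVecLin
    (mulVec_surjective_of_linearIndependent_row h) b
  rwa [Fintype.card_fun, Fintype.card_fun] at this

end LinearSystems

theorem Fin.card_filter_cons_eq_card_mul {α : Type*} [Fintype α] [DecidableEq α] {i : ℕ}
    (P : (Fin (i + 1) → α) → Prop) [DecidablePred P] (s : Finset (Fin i → α)) (c : ℕ)
    (h : ∀ t, #{v | P (Fin.cons v t)} = if t ∈ s then c else 0) : #{g | P g} = #s * c :=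
  calc #{g | P g} = ∑ t : Fin i → α, #{v | P (Fin.cons v t)} := by
        simp only [card_filter]
        rw [← (Fin.consEquiv fun _ => α).sum_comp, Fintype.sum_prod_type_right]
        rfl
    _ = #s * c := by simp [h, sum_ite_mem]

section Orthonormal

variable {R ι n : Type*} [Fintype n] [DecidableEq ι]

def IsOrthonormal [CommSemiring R] (g : ι → n → R) : Prop :=
  ∀ a b, g a ⬝ᵥ g b = if a = b then 1 else 0

instance [CommSemiring R] [DecidableEq R] [Fintype ι] (g : ι → n → R) :
    Decidable (IsOrthonormal g) := by
  unfold IsOrthonormal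
  infer_instance

theorem isOrthonormal_iff_mul_transpose_eq_one [CommSemiring R] [Fintype ι] (g : ι → n → R) :
    IsOrthonormal g ↔ of g * (of g)ᵀ = 1 := by
  simp only [IsOrthonormal, ← Matrix.ext_iff, mul_apply', one_apply]
  rfl

theorem isUnit_and_mul_transpose_eq_one_iff [CommRing R] [Fintype ι] (g : ι → ι → R) :
    IsUnit (of g) ∧ of g * (of g)ᵀ = 1 ↔ IsOrthonormal g := by
  rw [isOrthonormal_iff_mul_transpose_eq_one, and_iff_right_iff_imp]
  exact fun h => (isUnit_iff_isUnit_det _).mpr (isUnit_det_of_right_inverse h)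

theorem IsOrthonormal.sum_smul_dotProduct [CommSemiring R] [Fintype ι] {g : ι → n → R}
    (hg : IsOrthonormal g) (c : ι → R) (b : ι) : (∑ a, c a • g a) ⬝ᵥ g b = c b := by
  simp [sum_dotProduct, smul_dotProduct, hg _ b]

theorem IsOrthonormal.linearIndependent [CommRing R] [Fintype ι] {g : ι → n → R}
    (hg : IsOrthonormal g) : LinearIndependent R g :=
  Fintype.linearIndependent_iff.mpr fun c hc b => by
    rw [← hg.sum_smul_dotProduct c b, hc, zero_dotProduct]

theorem isOrthonormal_cons_iff [CommSemiring R] {i : ℕ} {g : Fin i → n → R} {v : n → R} :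
    IsOrthonormal (Fin.cons v g : Fin (i + 1) → n → R) ↔
      IsOrthonormal g ∧ v ⬝ᵥ v = 1 ∧ ∀ l, g l ⬝ᵥ v = 0 := by
  simp only [IsOrthonormal, Fin.forall_fin_succ, Fin.cons_zero, Fin.cons_succ, forall_and,
    dotProduct_comm v, ↓reduceIte, Fin.succ_ne_zero, eq_comm (a := (0 : Fin (i + 1))),
    Fin.succ_inj]
  tauto

end Orthonormal

section ZModTwo

variable {n : Type*} [Fintype n] {i : ℕ}

theorem ZMod.dotProduct_self_eq_one_dotProduct (v : n → ZMod 2) : v ⬝ᵥ v = 1 ⬝ᵥ v := by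
  have idem : ∀ x : ZMod 2, x * x = 1 * x := by decide
  simp only [dotProduct, Pi.one_apply, idem]

theorem IsOrthonormal.one_dotProduct {ι : Type*} [DecidableEq ι] {g : ι → n → ZMod 2}
    (hg : IsOrthonormal g) (l : ι) : 1 ⬝ᵥ g l = 1 := by
  rw [← ZMod.dotProduct_self_eq_one_dotProduct, hg l l, if_pos rfl]

theorem IsOrthonormal.linearIndependent_cons_one {g : Fin i → n → ZMod 2}
    (hg : IsOrthonormal g) (hs : ∑ l, g l ≠ 1) :
    LinearIndependent (ZMod 2) (Fin.cons 1 g : Fin (i + 1) → n → ZMod 2) := by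
  refine linearIndependent_finCons.mpr ⟨hg.linearIndependent, fun h1 => hs ?_⟩
  obtain ⟨c, hc⟩ := (Submodule.mem_span_range_iff_exists_fun _).mp h1
  have hc1 : c = 1 := funext fun l => by
    rw [← hg.sum_smul_dotProduct c l, hc, hg.one_dotProduct, Pi.one_apply]
  simpa [hc1] using hc

theorem not_isOrthonormal_cons_of_sum_eq_one {g : Fin i → n → ZMod 2} (hs : ∑ l, g l = 1)
    (v : n → ZMod 2) : ¬ IsOrthonormal (Fin.cons v g : Fin (i + 1) → n → ZMod 2) := by
  intro h
  obtain ⟨-, hv, hgv⟩ := isOrthonormal_cons_iff.mp h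
  rw [ZMod.dotProduct_self_eq_one_dotProduct, ← hs, sum_dotProduct,
    sum_eq_zero fun l _ => hgv l] at hv
  exact zero_ne_one hv

theorem IsOrthonormal.isOrthonormal_cons_one_sub_sum_iff (hn : Odd (Fintype.card n))
    {g : Fin i → n → ZMod 2} (hg : IsOrthonormal g) :
    IsOrthonormal (Fin.cons (1 - ∑ l, g l) g : Fin (i + 1) → n → ZMod 2) ↔ Even i := by
  have hn' : (Fintype.card n : ZMod 2) = 1 := ZMod.natCast_eq_one_iff_odd.mpr hn
  have horth : ∀ l, g l ⬝ᵥ (1 - ∑ l, g l) = 0 := fun l => by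
    rw [dotProduct_comm, sub_dotProduct, hg.one_dotProduct, sum_dotProduct]
    simp [hg _ l]
  rw [isOrthonormal_cons_iff, ZMod.dotProduct_self_eq_one_dotProduct, dotProduct_sub,
    one_dotProduct_one, dotProduct_sum, sum_congr rfl fun l _ => hg.one_dotProduct l]
  simp [hg, horth, hn', ZMod.natCast_eq_zero_iff_even]

variable [DecidableEq n]

theorem IsOrthonormal.card_extensions_mul {g : Fin i → n → ZMod 2} (hg : IsOrthonormal g)
    (hs : ∑ l, g l ≠ 1) :
    #{v | IsOrthonormal (Fin.cons v g : Fin (i + 1) → n → ZMod 2)} * 2 ^ (i + 1) =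
      2 ^ Fintype.card n := by
  have hsystem : ∀ v, IsOrthonormal (Fin.cons v g : Fin (i + 1) → n → ZMod 2) ↔
      of (vecCons 1 g) *ᵥ v = vecCons 1 0 := fun v => by
    rw [isOrthonormal_cons_iff, ZMod.dotProduct_self_eq_one_dotProduct, cons_mulVec, vecCons_inj,
      funext_iff]
    simp only [hg, true_and]
    rfl
  rw [filter_congr fun v _ => hsystem v]
  simpa using card_mulVec_eq_mul_pow (A := of (vecCons 1 g)) (hg.linearIndependent_cons_one hs)
    (vecCons 1 0)

variable (n) in
/-- By `card_extensions`, for `i < card n` these are exactly the orthonormal families of length `i`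
that extend to orthonormal families of length `i + 1`. -/
def extendableFamilies (i : ℕ) : Finset (Fin i → n → ZMod 2) :=
  {g | IsOrthonormal g ∧ ∑ l, g l ≠ 1}

theorem card_extensions (hi : i < Fintype.card n) (g : Fin i → n → ZMod 2) :
    #{v | IsOrthonormal (Fin.cons v g : Fin (i + 1) → n → ZMod 2)} =
      if g ∈ extendableFamilies n i then 2 ^ (Fintype.card n - 1 - i) else 0 := by
  split_ifs with hext
  · obtain ⟨hg, hs⟩ := by simpa [extendableFamilies] using hext
    refine Nat.eq_of_mul_eq_mul_right (pow_pos two_pos (i + 1)) ?_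
    rw [hg.card_extensions_mul hs, ← pow_add]
    congr 1
    omega
  · refine card_eq_zero.mpr <| filter_eq_empty_iff.mpr fun v _ hv => hext ?_
    have hg := (isOrthonormal_cons_iff.mp hv).1
    simpa [extendableFamilies, hg] using fun hs => not_isOrthonormal_cons_of_sum_eq_one hs v hv

theorem card_isOrthonormal_succ (hi : i < Fintype.card n) :
    #{g : Fin (i + 1) → n → ZMod 2 | IsOrthonormal g} =
      #(extendableFamilies n i) * 2 ^ (Fintype.card n - 1 - i) :=
  Fin.card_filter_cons_eq_card_mul _ _ _ (card_extensions hi)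

theorem card_extendableFamilies_succ (hn : Odd (Fintype.card n)) (hi : i < Fintype.card n) :
    #(extendableFamilies n (i + 1)) =
      #(extendableFamilies n i) * (2 ^ (Fintype.card n - 1 - i) - if Even i then 1 else 0) := by
  refine Fin.card_filter_cons_eq_card_mul _ _ _ fun g => ?_
  have herase : ({v | IsOrthonormal (Fin.cons v g : Fin (i + 1) → n → ZMod 2) ∧
      ∑ l, (Fin.cons v g : Fin (i + 1) → n → ZMod 2) l ≠ 1} : Finset (n → ZMod 2)) =
      ({v | IsOrthonormal (Fin.cons v g : Fin (i + 1) → n → ZMod 2)} : Finset _).erase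
        (1 - ∑ l, g l) := by
    ext v
    simp [Fin.sum_cons, eq_sub_iff_add_eq, and_comm]
  rw [herase, card_erase_eq_ite, card_extensions hi]
  by_cases hext : g ∈ extendableFamilies n i
  · have hg : IsOrthonormal g := (mem_filter.mp hext).2.1
    simp only [hext, if_true, mem_filter, mem_univ, true_and,
      hg.isOrthonormal_cons_one_sub_sum_iff hn]
    split_ifs <;> rfl
  · simp [hext]

theorem card_extendableFamilies {r : ℕ} (hn : Odd (Fintype.card n)) (hr : r < Fintype.card n) :
    #(extendableFamilies n r) =
      ∏ i ∈ range r, (2 ^ (Fintype.card n - 1 - i) - if Even i then 1 else 0) := by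
  induction r with
  | zero =>
    have : Nonempty n := Fintype.card_pos_iff.mp hn.pos
    simp [extendableFamilies, IsOrthonormal]
  | succ r ih =>
    rw [card_extendableFamilies_succ hn (by omega), ih (by omega), prod_range_succ]

end ZModTwo

theorem prod_range_two_pow_sub_ite_even (k : ℕ) :
    ∏ i ∈ range (2 * k), (2 ^ (2 * k - i) - if Even i then 1 else 0) =
      2 ^ (k ^ 2) * ∏ i ∈ Icc 1 k, (2 ^ (2 * i) - 1) := by
  induction k with
  | zero => simp
  | succ k ih =>
    have hshift : ∀ i, 2 * (k + 1) - (i + 1 + 1) = 2 * k - i := fun i => by omega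
    rw [show 2 * (k + 1) = 2 * k + 1 + 1 by ring, prod_range_succ', prod_range_succ']
    simp only [← show 2 * (k + 1) = 2 * k + 1 + 1 by ring, hshift, Nat.even_add_one, not_not, ih,
      prod_Icc_succ_top (Nat.le_add_left 1 k), Even.zero, not_true_eq_false, if_true, if_false,
      tsub_zero, zero_add]
    rw [show 2 * (k + 1) - 1 = 2 * k + 1 by omega, show (k + 1) ^ 2 = k ^ 2 + (2 * k + 1) by ring,
      pow_add]
    ring

theorem orthogonal_group_card_odd (k : ℕ) :
    (Finset.univ.filter
        (fun A : Matrix (Fin (2 * k + 1)) (Fin (2 * k + 1)) (ZMod 2) =>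
          IsUnit A ∧ A * A.transpose = 1)).card =
      2 ^ (k ^ 2) * ∏ i ∈ Finset.Icc 1 k, (2 ^ (2 * i) - 1) := by
  have hodd : Odd (Fintype.card (Fin (2 * k + 1))) := by simp
  have hlast : 2 * k < Fintype.card (Fin (2 * k + 1)) := by simp
  change #{g : Fin (2 * k + 1) → Fin (2 * k + 1) → ZMod 2 | IsUnit (of g) ∧ of g * (of g)ᵀ = 1} = _
  rw [filter_congr fun g _ => isUnit_and_mul_transpose_eq_one_iff g]
  calc #{g : Fin (2 * k + 1) → Fin (2 * k + 1) → ZMod 2 | IsOrthonormal g}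
      = #(extendableFamilies (Fin (2 * k + 1)) (2 * k)) := by
        simp [card_isOrthonormal_succ hlast]
    _ = 2 ^ (k ^ 2) * ∏ i ∈ Icc 1 k, (2 ^ (2 * i) - 1) := by
        rw [card_extendableFamilies hodd hlast, ← prod_range_two_pow_sub_ite_even]
        simp
end
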